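/- Let Z be a proper geodesic δ-hyperbolic space, y, z ∈ ∂Z distinct, and x, x' ∈ Z. Let σ₁', σ₂' be geodesic rays from x' to y and z respectively, and σ₁, σ₂ any geodesic rays with σ₁(∞) = y, σ₂(∞) = z. Then the visual quasi-metrics satisfy d_{x'}(y,z) ≤ e^{164δ} · e^{β_{σ₁'}(x,x') + β_{σ₂'}(x,x')} · d_x(y,z) ≤ e^{244δ} · e^{β_{σ₁}(x,x') + β_{σ₂}(x,x')} · d_x(y,z). -/
import Mathlib


open Filter Metric Set

noncomputable def gromovProd {Z : Type*} [MetricSpace Z] (x y z : Z) : ℝ :=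
  (dist x y + dist x z - dist y z) / 2

/-- `Z` is δ-hyperbolic in the Gromov product sense. -/
def IsDeltaHyperbolic (Z : Type*) [MetricSpace Z] (δ : ℝ) : Prop :=
  ∀ w x y z : Z, min (gromovProd x w y) (gromovProd x y z) - δ ≤ gromovProd x w z

/-- `f` parametrizes a geodesic segment from `x` to `y` by arclength on `[0, dist x y]`. -/
def IsGeodesicSegment {Z : Type*} [MetricSpace Z] (f : ℝ → Z) (x y : Z) : Prop :=
  f 0 = x ∧ f (dist x y) = y ∧
    ∀ s ∈ Set.Icc (0:ℝ) (dist x y), ∀ t ∈ Set.Icc (0:ℝ) (dist x y),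
      dist (f s) (f t) = |s - t|

/-- `Z` is a geodesic metric space. -/
def IsGeodesicSpace (Z : Type*) [MetricSpace Z] : Prop :=
  ∀ x y : Z, ∃ f : ℝ → Z, IsGeodesicSegment f x y

/-- The image of the geodesic segment `[x,y]` parametrized by `f`. -/
def segImage {Z : Type*} [MetricSpace Z] (f : ℝ → Z) (x y : Z) : Set Z :=
  f '' Set.Icc 0 (dist x y)

/-- A geodesic ray: an isometric embedding of `[0,∞)`. -/
def IsGeodesicRay {Z : Type*} [MetricSpace Z] (σ : ℝ → Z) : Prop :=
  ∀ s t : ℝ, 0 ≤ s → 0 ≤ t → dist (σ s) (σ t) = |s - t|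

/-- A bi-infinite geodesic: an isometric embedding of `ℝ`. -/
def IsBiInfGeodesic {Z : Type*} [MetricSpace Z] (γ : ℝ → Z) : Prop :=
  ∀ s t : ℝ, dist (γ s) (γ t) = |s - t|

/-- Two geodesic rays are asymptotic (same endpoint at infinity):
their images are at finite Hausdorff distance. -/
def AsymptoticRays {Z : Type*} [MetricSpace Z] (σ σ' : ℝ → Z) : Prop :=
  EMetric.hausdorffEdist (σ '' Set.Ici 0) (σ' '' Set.Ici 0) ≠ ⊤

/-- Extended Gromov product (with respect to `x`) of the two boundary points
represented by the geodesic rays `σ`, `σ'`. -/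
noncomputable def extGP {Z : Type*} [MetricSpace Z] (x : Z) (σ σ' : ℝ → Z) : EReal :=
  Filter.liminf (fun p : ℝ × ℝ => ((gromovProd x (σ p.1) (σ' p.2) : ℝ) : EReal))
    (Filter.atTop ×ˢ Filter.atTop)

/-- Extended Gromov product (with respect to `x`) of a point `y ∈ Z` and the boundary
point represented by the geodesic ray `σ`. -/
noncomputable def ptRayGP {Z : Type*} [MetricSpace Z] (x y : Z) (σ : ℝ → Z) : EReal :=
  Filter.liminf (fun t : ℝ => ((gromovProd x y (σ t) : ℝ) : EReal)) Filter.atTop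

/-- The visual quasi-metric `d_x(ξ,η) = exp(-2⟨ξ,η⟩_x)` on the Gromov boundary,
for boundary points represented by geodesic rays. -/
noncomputable def visDist {Z : Type*} [MetricSpace Z] (x : Z) (σ σ' : ℝ → Z) : ℝ :=
  if extGP x σ σ' = ⊤ then 0 else Real.exp (-2 * (extGP x σ σ').toReal)

section Aux

variable {Z : Type*} [MetricSpace Z]

lemma gp_nonneg (x y z : Z) : 0 ≤ gromovProd x y z := by
  have h := dist_triangle y x z
  unfold gromovProd
  rw [dist_comm y x] at h
  linarith

lemma gp_comm (x y z : Z) : gromovProd x y z = gromovProd x z y := by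
  unfold gromovProd
  rw [dist_comm y z]; ring

lemma gp_le_dist (x y z : Z) : gromovProd x y z ≤ dist x z := by
  unfold gromovProd
  have h2 := dist_triangle x z y
  rw [dist_comm z y] at h2
  linarith

lemma gp_move (x a b c : Z) : gromovProd x a c - dist a b ≤ gromovProd x b c := by
  unfold gromovProd
  have t1 : dist x a ≤ dist x b + dist a b := by
    have := dist_triangle x b a; rw [dist_comm b a] at this; linarith
  have t2 : dist b c ≤ dist a b + dist a c := by
    have := dist_triangle b a c; rw [dist_comm b a] at this; linarith
  linarith

lemma visDist_nonneg (x : Z) (σ σ' : ℝ → Z) : 0 ≤ visDist x σ σ' := by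
  unfold visDist; split
  · exact le_rfl
  · exact (Real.exp_pos _).le

lemma ray_gp (x : Z) {σ : ℝ → Z} (hσ : IsGeodesicRay σ) {s u : ℝ} (hs : 0 ≤ s) (hu : 0 ≤ u) :
    min s u - dist x (σ 0) ≤ gromovProd x (σ s) (σ u) := by
  have hds : dist (σ s) (σ 0) = s := by rw [hσ s 0 hs le_rfl]; simp [abs_of_nonneg hs]
  have hdu : dist (σ u) (σ 0) = u := by rw [hσ u 0 hu le_rfl]; simp [abs_of_nonneg hu]
  have hsu : dist (σ s) (σ u) = |s - u| := hσ s u hs hu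
  have h1 : s ≤ dist x (σ s) + dist x (σ 0) := by
    have h := dist_triangle (σ s) x (σ 0)
    rw [dist_comm (σ s) x, hds] at h; linarith
  have h2 : u ≤ dist x (σ u) + dist x (σ 0) := by
    have h := dist_triangle (σ u) x (σ 0)
    rw [dist_comm (σ u) x, hdu] at h; linarith
  unfold gromovProd
  rw [hsu]
  rcases le_total s u with h | h
  · rw [min_eq_left h, abs_of_nonpos (by linarith)]; linarith
  · rw [min_eq_right h, abs_of_nonneg (by linarith)]; linarith

/-- Cross Gromov-product bound for asymptotic rays. -/
lemma cross_gp (x : Z) {σ σ' : ℝ → Z} (hσ : IsGeodesicRay σ) (hσ' : IsGeodesicRay σ')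
    (h : AsymptoticRays σ' σ) :
    ∃ A : ℝ, 0 ≤ A ∧ ∀ t ≥ (0:ℝ), ∀ s ≥ (0:ℝ), min t s - A ≤ gromovProd x (σ' t) (σ s) := by
  set H := EMetric.hausdorffEdist (σ' '' Set.Ici 0) (σ '' Set.Ici 0) with hH
  have hHt : H ≠ ⊤ := h
  set D : ℝ := (H + 1).toReal with hD
  have hD0 : 0 ≤ D := ENNReal.toReal_nonneg
  have hnear : ∀ t ≥ (0:ℝ), ∃ u ≥ (0:ℝ), dist (σ' t) (σ u) ≤ D := by
    intro t ht
    have hmem : σ' t ∈ σ' '' Set.Ici 0 := ⟨t, ht, rfl⟩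
    have h1 : EMetric.infEdist (σ' t) (σ '' Set.Ici 0) < H + 1 :=
      lt_of_le_of_lt (EMetric.infEdist_le_hausdorffEdist_of_mem hmem)
        (ENNReal.lt_add_right hHt one_ne_zero)
    obtain ⟨y, ⟨u, hu, rfl⟩, hy⟩ := EMetric.infEdist_lt_iff.mp h1
    refine ⟨u, hu, ?_⟩
    rw [dist_edist]
    exact ENNReal.toReal_mono (by simp [hHt]) hy.le
  set c := dist x (σ 0) with hc
  set c' := dist x (σ' 0) with hc'
  have hc0 : 0 ≤ c := dist_nonneg
  have hc0' : 0 ≤ c' := dist_nonneg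
  refine ⟨2 * c + c' + 2 * D, by positivity, ?_⟩
  intro t ht s hs
  obtain ⟨u, hu, hdu⟩ := hnear t ht
  have h1 : min u s - c ≤ gromovProd x (σ u) (σ s) := ray_gp x hσ hu hs
  have h2 : gromovProd x (σ u) (σ s) - dist (σ u) (σ' t) ≤ gromovProd x (σ' t) (σ s) :=
    gp_move x (σ u) (σ' t) (σ s)
  rw [dist_comm (σ u) (σ' t)] at h2
  have hdx : t - c' ≤ dist x (σ' t) := by
    have hdt : dist (σ' t) (σ' 0) = t := by rw [hσ' t 0 ht le_rfl]; simp [abs_of_nonneg ht]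
    have h3 := dist_triangle (σ' t) x (σ' 0)
    rw [dist_comm (σ' t) x, hdt] at h3
    linarith
  have hul : t - c' - D - c ≤ u := by
    have hdu2 : dist (σ u) (σ 0) = u := by rw [hσ u 0 hu le_rfl]; simp [abs_of_nonneg hu]
    have h3 := dist_triangle x (σ u) (σ' t)
    rw [dist_comm (σ u) (σ' t)] at h3
    have h4 := dist_triangle x (σ 0) (σ u)
    have h5 : dist (σ 0) (σ u) = u := by rw [dist_comm]; exact hdu2
    rw [h5] at h4
    linarith
  have hmin : min t s - (c + c' + D) ≤ min u s := by
    rcases le_total u s with h' | h'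
    · rw [min_eq_left h']; linarith [min_le_left t s]
    · rw [min_eq_right h']; linarith [min_le_right t s]
  linarith

/-- Busemann comparison for asymptotic rays: `b' ≤ b + 2δ`. -/
lemma buse_le {δ : ℝ} (hδ : 0 ≤ δ) (hhyp : IsDeltaHyperbolic Z δ)
    {σ σ' : ℝ → Z} (hσ : IsGeodesicRay σ) (hσ' : IsGeodesicRay σ')
    (h : AsymptoticRays σ' σ) (x x' : Z) {b b' : ℝ}
    (hb : Filter.Tendsto (fun t => dist x (σ t) - dist x' (σ t)) Filter.atTop (nhds b))
    (hb' : Filter.Tendsto (fun t => dist x (σ' t) - dist x' (σ' t)) Filter.atTop (nhds b')) :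
    b' ≤ b + 2 * δ := by
  obtain ⟨A, hA0, hA⟩ := cross_gp x hσ hσ' h
  have hev : ∀ᶠ t in atTop,
      (dist x (σ' t) - dist x' (σ' t)) - (dist x (σ t) - dist x' (σ t)) ≤ 2 * δ := by
    filter_upwards [eventually_ge_atTop (max 0 (dist x x' + A))] with t ht
    have ht0 : (0:ℝ) ≤ t := le_trans (le_max_left _ _) ht
    have hcross : min t t - A ≤ gromovProd x (σ' t) (σ t) := hA t ht0 t ht0
    rw [min_self] at hcross
    have hle : gromovProd x (σ' t) x' ≤ dist x x' := gp_le_dist x (σ' t) x'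
    have hcmp : gromovProd x (σ' t) x' ≤ gromovProd x (σ t) (σ' t) := by
      rw [gp_comm x (σ t) (σ' t)]
      have := le_max_right 0 (dist x x' + A)
      linarith
    have hh := hhyp (σ t) x (σ' t) x'
    rw [min_eq_right hcmp] at hh
    -- hh : gromovProd x (σ' t) x' - δ ≤ gromovProd x (σ t) x'
    unfold gromovProd at hh
    rw [dist_comm (σ' t) x', dist_comm (σ t) x'] at hh
    linarith
  have := le_of_tendsto (hb'.sub hb) hev
  linarith

end Aux

/-- Change of basepoint for visual quasi-metrics:
`d_{x'}(y,z) ≤ e^{164δ} e^{β_{σ₁'}(x,x') + β_{σ₂'}(x,x')} d_x(y,z)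
            ≤ e^{244δ} e^{β_{σ₁}(x,x') + β_{σ₂}(x,x')} d_x(y,z)`,
where `σ₁', σ₂'` are rays from `x'` to `y, z` and `σ₁, σ₂` are any rays with these
endpoints. -/
theorem stmt15 {Z : Type*} [MetricSpace Z] [ProperSpace Z] {δ : ℝ}
    (hgeo : IsGeodesicSpace Z) (hhyp : IsDeltaHyperbolic Z δ) (x x' : Z)
    (σ₁ σ₂ σ₁' σ₂' : ℝ → Z)
    (h1 : IsGeodesicRay σ₁) (h2 : IsGeodesicRay σ₂)
    (h1' : IsGeodesicRay σ₁') (h2' : IsGeodesicRay σ₂')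
    (h10' : σ₁' 0 = x') (h20' : σ₂' 0 = x')
    (hasym1 : AsymptoticRays σ₁' σ₁) (hasym2 : AsymptoticRays σ₂' σ₂)
    (hne : extGP x σ₁ σ₂ ≠ ⊤)
    (b₁ b₂ b₁' b₂' : ℝ)
    (hb₁ : Filter.Tendsto (fun t => dist x (σ₁ t) - dist x' (σ₁ t)) Filter.atTop (nhds b₁))
    (hb₂ : Filter.Tendsto (fun t => dist x (σ₂ t) - dist x' (σ₂ t)) Filter.atTop (nhds b₂))
    (hb₁' : Filter.Tendsto (fun t => dist x (σ₁' t) - dist x' (σ₁' t)) Filter.atTop (nhds b₁'))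
    (hb₂' : Filter.Tendsto (fun t => dist x (σ₂' t) - dist x' (σ₂' t)) Filter.atTop (nhds b₂')) :
    visDist x' σ₁' σ₂' ≤ Real.exp (164 * δ) * Real.exp (b₁' + b₂') * visDist x σ₁ σ₂ ∧
      Real.exp (164 * δ) * Real.exp (b₁' + b₂') * visDist x σ₁ σ₂ ≤
        Real.exp (244 * δ) * Real.exp (b₁ + b₂) * visDist x σ₁ σ₂ := by
  -- δ is nonnegative
  have hδ : 0 ≤ δ := by
    have h := hhyp x x x x
    have h0 : gromovProd x x x = 0 := by unfold gromovProd; simp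
    rw [h0, min_self] at h
    linarith
  constructor
  · -- first inequality
    -- extGP x σ₁ σ₂ is a real number r
    have hgpnn : ∀ (y : Z) (τ τ' : ℝ → Z), (0 : EReal) ≤ extGP y τ τ' := by
      intro y τ τ'
      refine Filter.le_liminf_of_le ?_ (Filter.Eventually.of_forall fun p => ?_)
      · isBoundedDefault
      · exact_mod_cast gp_nonneg y (τ p.1) (τ' p.2)
    have hner : extGP x σ₁ σ₂ ≠ ⊥ := by
      intro hb
      have h0 := hgpnn x σ₁ σ₂
      rw [hb] at h0
      simp at h0
    set r : ℝ := (extGP x σ₁ σ₂).toReal with hr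
    have hrc : (r : EReal) = extGP x σ₁ σ₂ := EReal.coe_toReal hne hner
    have hVx : visDist x σ₁ σ₂ = Real.exp (-2 * r) := by unfold visDist; rw [if_neg hne]
    by_cases htop : extGP x' σ₁' σ₂' = ⊤
    · rw [hVx]
      unfold visDist
      rw [if_pos htop]
      positivity
    · have hner' : extGP x' σ₁' σ₂' ≠ ⊥ := fun hb => by
        have := hgpnn x' σ₁' σ₂'; rw [hb] at this; exact absurd this (by simp)
      set r' : ℝ := (extGP x' σ₁' σ₂').toReal with hr'
      have hrc' : (r' : EReal) = extGP x' σ₁' σ₂' := EReal.coe_toReal htop hner'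
      have hVx' : visDist x' σ₁' σ₂' = Real.exp (-2 * r') := by unfold visDist; rw [if_neg htop]
      obtain ⟨A₁, hA₁0, hA₁⟩ := cross_gp x h1 h1' hasym1
      obtain ⟨A₂, hA₂0, hA₂⟩ := cross_gp x h2 h2' hasym2
      -- key: r - 2δ - (b₁'+b₂')/2 ≤ r'
      have hkey : r - 2 * δ - (b₁' + b₂') / 2 ≤ r' := by
        refine le_of_forall_pos_le_add fun ε hε => ?_
        -- eventually gromovProd x (σ₁ s)(σ₂ t) > r - ε/2
        have hlt : ((r - ε / 2 : ℝ) : EReal) < extGP x σ₁ σ₂ := by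
          rw [← hrc]; exact_mod_cast (by linarith : r - ε / 2 < r)
        have hev := Filter.eventually_lt_of_lt_liminf (u := fun p : ℝ × ℝ =>
          ((gromovProd x (σ₁ p.1) (σ₂ p.2) : ℝ) : EReal)) (f := atTop ×ˢ atTop) hlt
        rw [eventually_prod_iff] at hev
        obtain ⟨pa, hpa, pb, hpb, hP⟩ := hev
        obtain ⟨S, hS⟩ := eventually_atTop.mp hpa
        obtain ⟨T, hT⟩ := eventually_atTop.mp hpb
        set s₀ : ℝ := max S (max 0 (r + A₁)) with hs₀
        set t₀ : ℝ := max T (max 0 (r + A₂)) with ht₀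
        have hs₀0 : (0:ℝ) ≤ s₀ := le_trans (le_max_left 0 _) (le_max_right _ _)
        have ht₀0 : (0:ℝ) ≤ t₀ := le_trans (le_max_left 0 _) (le_max_right _ _)
        have hs₀r : r + A₁ ≤ s₀ := le_trans (le_max_right 0 _) (le_max_right _ _)
        have ht₀r : r + A₂ ≤ t₀ := le_trans (le_max_right 0 _) (le_max_right _ _)
        have hgp0 : r - ε / 2 < gromovProd x (σ₁ s₀) (σ₂ t₀) := by
          have h := hP (hS s₀ (le_max_left _ _)) (hT t₀ (le_max_left _ _))
          have h' : ((r - ε / 2 : ℝ) : EReal)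
              < ((gromovProd x (σ₁ s₀) (σ₂ t₀) : ℝ) : EReal) := h
          exact_mod_cast h'
        -- eventual bound in the product filter
        have hcoe : ((r - 2*δ - (b₁'+b₂')/2 - ε : ℝ) : EReal) ≤ extGP x' σ₁' σ₂' := by
          refine Filter.le_liminf_of_le ?_ ?_
          · isBoundedDefault
          have e1 : ∀ᶠ p : ℝ × ℝ in atTop ×ˢ atTop, s₀ ≤ p.1 :=
            (eventually_ge_atTop s₀).prod_inl _
          have e2 : ∀ᶠ p : ℝ × ℝ in atTop ×ˢ atTop, t₀ ≤ p.2 :=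
            (eventually_ge_atTop t₀).prod_inr _
          have e3 : ∀ᶠ p : ℝ × ℝ in atTop ×ˢ atTop,
              dist x (σ₁' p.1) - dist x' (σ₁' p.1) ≤ b₁' + ε / 2 :=
            (hb₁'.eventually_le_const (by linarith)).prod_inl _
          have e4 : ∀ᶠ p : ℝ × ℝ in atTop ×ˢ atTop,
              dist x (σ₂' p.2) - dist x' (σ₂' p.2) ≤ b₂' + ε / 2 :=
            (hb₂'.eventually_le_const (by linarith)).prod_inr _
          filter_upwards [e1, e2, e3, e4] with p hp1 hp2 hp3 hp4
          have hp10 : (0:ℝ) ≤ p.1 := le_trans hs₀0 hp1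
          have hp20 : (0:ℝ) ≤ p.2 := le_trans ht₀0 hp2
          -- cross bounds
          have hcr1 : r ≤ gromovProd x (σ₁' p.1) (σ₁ s₀) := by
            have := hA₁ p.1 hp10 s₀ hs₀0
            rw [min_eq_right hp1] at this
            linarith
          have hcr2 : r ≤ gromovProd x (σ₂' p.2) (σ₂ t₀) := by
            have := hA₂ p.2 hp20 t₀ ht₀0
            rw [min_eq_right hp2] at this
            linarith
          -- hyperbolicity twice
          have hh1 := hhyp (σ₁ s₀) x (σ₂ t₀) (σ₂' p.2)
          have hh2 := hhyp (σ₁' p.1) x (σ₁ s₀) (σ₂' p.2)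
          rw [gp_comm x (σ₂ t₀) (σ₂' p.2)] at hh1
          have hstep1 : r - ε / 2 - δ ≤ gromovProd x (σ₁ s₀) (σ₂' p.2) := by
            have hm : r - ε / 2 ≤ min (gromovProd x (σ₁ s₀) (σ₂ t₀))
                (gromovProd x (σ₂' p.2) (σ₂ t₀)) :=
              le_min (by linarith) (by linarith)
            linarith
          have hstep2 : r - ε / 2 - 2 * δ ≤ gromovProd x (σ₁' p.1) (σ₂' p.2) := by
            have hm : r - ε / 2 - δ ≤ min (gromovProd x (σ₁' p.1) (σ₁ s₀))
                (gromovProd x (σ₁ s₀) (σ₂' p.2)) :=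
              le_min (by linarith) hstep1
            linarith
          -- basepoint change identity
          have hid : gromovProd x' (σ₁' p.1) (σ₂' p.2) = gromovProd x (σ₁' p.1) (σ₂' p.2)
              - ((dist x (σ₁' p.1) - dist x' (σ₁' p.1))
                 + (dist x (σ₂' p.2) - dist x' (σ₂' p.2))) / 2 := by
            unfold gromovProd; ring
          have hfin : r - 2*δ - (b₁'+b₂')/2 - ε ≤ gromovProd x' (σ₁' p.1) (σ₂' p.2) := by
            rw [hid]; linarith
          exact_mod_cast hfin
        rw [← hrc'] at hcoe
        have := EReal.coe_le_coe_iff.mp hcoe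
        linarith
      rw [hVx, hVx', ← Real.exp_add, ← Real.exp_add]
      exact Real.exp_le_exp.mpr (by linarith)
  · -- second inequality
    have hbb1 : b₁' ≤ b₁ + 2 * δ := buse_le hδ hhyp h1 h1' hasym1 x x' hb₁ hb₁'
    have hbb2 : b₂' ≤ b₂ + 2 * δ := buse_le hδ hhyp h2 h2' hasym2 x x' hb₂ hb₂'
    have hV : 0 ≤ visDist x σ₁ σ₂ := by
      unfold visDist; split
      · exact le_rfl
      · exact (Real.exp_pos _).le
    refine mul_le_mul_of_nonneg_right ?_ hV
    rw [← Real.exp_add, ← Real.exp_add]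
    exact Real.exp_le_exp.mpr (by linarith)
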